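/- arXiv:2305.02834 — 4 statements merged into one kernel-verified Lean document; each statement's English description precedes it below -/
import Mathlib

section
/- In the 2×2 game with payoff matrix: (move, move) → (1-φ, -φ); (move, stay) → (1-φ, 0); (stay, move) → (0, 1-φ); (stay, stay) → (1, 0), with 0 < φ < 1/2, there is no pure-strategy Nash equilibrium, and the unique mixed Nash equilibrium has the row player (favorite) playing 'move' with probability 1-φ and the column player (challenger) playing 'move' with probability φ; the resulting expected payoffs are 1-φ for the favorite and 0 for the challenger. -/
/-- Row player's (favorite's) payoff; `true` = move, `false` = stay. -/
noncomputable def payR (φ : ℝ) : Bool → Bool → ℝ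
  | true,  true  => 1 - φ
  | true,  false => 1 - φ
  | false, true  => 0
  | false, false => 1

/-- Column player's (challenger's) payoff. -/
noncomputable def payC (φ : ℝ) : Bool → Bool → ℝ
  | true,  true  => -φ
  | true,  false => 0
  | false, true  => 1 - φ
  | false, false => 0

/-- Expected payoff of the row player when he moves with probability `p`
and the column player moves with probability `q`. -/
noncomputable def ER (φ p q : ℝ) : ℝ :=
  p * q * payR φ true true + p * (1 - q) * payR φ true false +
  (1 - p) * q * payR φ false true + (1 - p) * (1 - q) * payR φ false false

/-- Expected payoff of the column player. -/
noncomputable def EC (φ p q : ℝ) : ℝ :=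
  p * q * payC φ true true + p * (1 - q) * payC φ true false +
  (1 - p) * q * payC φ false true + (1 - p) * (1 - q) * payC φ false false

theorem stmt4 (φ : ℝ) (hφ0 : 0 < φ) (hφ : φ < 1/2) :
    (¬ ∃ r c : Bool, (∀ r' : Bool, payR φ r' c ≤ payR φ r c) ∧
        (∀ c' : Bool, payC φ r c' ≤ payC φ r c)) ∧
    (∀ p q : ℝ, p ∈ Set.Icc (0:ℝ) 1 → q ∈ Set.Icc (0:ℝ) 1 →
      (((∀ p' ∈ Set.Icc (0:ℝ) 1, ER φ p' q ≤ ER φ p q) ∧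
        (∀ q' ∈ Set.Icc (0:ℝ) 1, EC φ p q' ≤ EC φ p q)) ↔ (p = 1 - φ ∧ q = φ))) ∧
    ER φ (1 - φ) φ = 1 - φ ∧ EC φ (1 - φ) φ = 0 := by
  refine ⟨?_, ?_, by simp [ER, payR]; ring, by simp [EC, payC]; ring⟩
  · rintro ⟨r, c, hR, hC⟩
    cases r <;> cases c
    · have := hC true; simp [payC] at this; linarith
    · have := hR true; simp [payR] at this; linarith
    · have := hR false; simp [payR] at this; linarith
    · have := hC false; simp [payC] at this; linarith
  · intro p q hp hq
    obtain ⟨hp0, hp1⟩ := hp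
    obtain ⟨hq0, hq1⟩ := hq
    constructor
    · rintro ⟨hBR, hBC⟩
      have A := hBR 0 ⟨le_refl 0, by norm_num⟩
      have B := hBR 1 ⟨by norm_num, le_refl 1⟩
      have C := hBC 0 ⟨le_refl 0, by norm_num⟩
      have D := hBC 1 ⟨by norm_num, le_refl 1⟩
      simp only [ER, EC, payR, payC] at A B C D
      have hqφ : q = φ := by
        rcases lt_trichotomy q φ with h | h | h
        · -- q < φ : A forces p = 0, then D gives contradiction
          have hp' : p ≤ 0 := by nlinarith
          nlinarith
        · exact h
        · -- q > φ : B forces p = 1, then C gives contradiction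
          have hp' : 1 ≤ p := by nlinarith
          nlinarith
      have hpφ : p = 1 - φ := by
        subst hqφ
        nlinarith
      exact ⟨hpφ, hqφ⟩
    · rintro ⟨hpe, hqe⟩
      constructor
      · intro p' hp'
        simp only [ER, payR]
        rw [hpe, hqe]; nlinarith [sq_nonneg (p' - (1 - φ))]
      · intro q' hq'
        simp only [EC, payC]
        rw [hpe]; nlinarith [sq_nonneg (q' - φ)]
end

section
/- Let a > 0, α = sqrt((1+a)/a), and 0 < φ < 1/2. For fixed x2 ∈ [1/2, 1], define candidate 1's first-stage payoff for x1 ∈ [0, x2) by g1(x1) = x1·((1-φ)/2 + φα/(α+1)) + x2·((1-φ)/2 + φ/(α+1)) if x1 ≤ x2/α, and g1(x1) = x1·((1-φ)/2 - 2φα/(α^2-1)) + x2·((1-φ)/2 + 2φα/(α^2-1)) if x2/α < x1 < x2. If φ > (α^2-1)/(α^2+4α-1), then g1 is maximized on [0, x2) uniquely at x1 = x2/α. -/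
/-- Candidate 1's first-stage payoff as a function of his platform `x1`,
given the opponent's platform `x2`. -/
noncomputable def g1 (φ α x2 x1 : ℝ) : ℝ :=
  if x1 ≤ x2 / α then
    x1 * ((1 - φ)/2 + φ * α / (α + 1)) + x2 * ((1 - φ)/2 + φ / (α + 1))
  else
    x1 * ((1 - φ)/2 - 2 * φ * α / (α^2 - 1)) + x2 * ((1 - φ)/2 + 2 * φ * α / (α^2 - 1))

theorem stmt6 (a φ x2 : ℝ) (ha : 0 < a) (hφ0 : 0 < φ) (hφ : φ < 1/2)
    (hx2 : x2 ∈ Set.Icc (1/2 : ℝ) 1)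
    (α : ℝ) (hα : α = Real.sqrt ((1 + a) / a))
    (hΨ : φ > (α^2 - 1) / (α^2 + 4*α - 1)) :
    ∀ x1 ∈ Set.Ico (0:ℝ) x2, x1 ≠ x2 / α → g1 φ α x2 x1 < g1 φ α x2 (x2 / α) := by
  have hs : (1 : ℝ) < (1 + a) / a := by
    rw [lt_div_iff₀ ha]; linarith
  have hα2 : α ^ 2 = (1 + a) / a := by
    rw [hα, sq, Real.mul_self_sqrt (by positivity)]
  have hαnn : 0 ≤ α := by rw [hα]; exact Real.sqrt_nonneg _
  have hα1 : 1 < α := by nlinarith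
  have hx2pos : (0 : ℝ) < x2 := lt_of_lt_of_le (by norm_num) hx2.1
  have hden : (0 : ℝ) < α ^ 2 - 1 := by nlinarith
  have hden2 : (0 : ℝ) < α ^ 2 + 4 * α - 1 := by nlinarith
  have hc2 : (1 - φ)/2 - 2 * φ * α / (α^2 - 1) < 0 := by
    rw [gt_iff_lt, div_lt_iff₀ hden2] at hΨ
    rw [sub_neg, div_lt_div_iff₀ (by norm_num) hden]
    nlinarith
  intro x1 hx1 hne
  unfold g1
  rw [if_pos le_rfl]
  by_cases h : x1 ≤ x2 / α
  · rw [if_pos h]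
    have hlt : x1 < x2 / α := lt_of_le_of_ne h hne
    have hc1 : (0 : ℝ) < (1 - φ)/2 + φ * α / (α + 1) := by
      have : (0:ℝ) ≤ φ * α / (α + 1) := by positivity
      linarith
    nlinarith
  · rw [if_neg h]
    push_neg at h
    have hkey : (x2 / α) * ((1 - φ)/2 + φ * α / (α + 1)) + x2 * ((1 - φ)/2 + φ / (α + 1))
        = (x2 / α) * ((1 - φ)/2 - 2 * φ * α / (α^2 - 1)) + x2 * ((1 - φ)/2 + 2 * φ * α / (α^2 - 1)) := by
      have h1 : α ≠ 0 := by linarith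
      have h2 : α + 1 ≠ 0 := by linarith
      have h3 : α ^ 2 - 1 ≠ 0 := ne_of_gt hden
      field_simp
      ring
    rw [hkey]
    have := mul_lt_mul_of_neg_right h hc2
    linarith
end

section
/- For α = sqrt((1+a)/a) with a > 0, the probability that the election is still open at the equilibrium platforms, ((α-1)/(α+1))^2, is strictly decreasing in a, and the equilibrium payoff 1/2 - (φ/2)·((α-1)/(α+1))^2 is strictly increasing in a for any fixed φ ∈ (0, 1/2). -/
theorem stmt12 (φ : ℝ) (hφ0 : 0 < φ) (hφ : φ < 1/2) :
    StrictAntiOn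
      (fun a : ℝ => ((Real.sqrt ((1 + a) / a) - 1) / (Real.sqrt ((1 + a) / a) + 1))^2)
      (Set.Ioi 0) ∧
    StrictMonoOn
      (fun a : ℝ =>
        1/2 - (φ/2) * ((Real.sqrt ((1 + a) / a) - 1) / (Real.sqrt ((1 + a) / a) + 1))^2)
      (Set.Ioi 0) := by
  have key : StrictAntiOn
      (fun a : ℝ => ((Real.sqrt ((1 + a) / a) - 1) / (Real.sqrt ((1 + a) / a) + 1))^2)
      (Set.Ioi 0) := by
    intro a ha b hb hab
    simp only [Set.mem_Ioi] at ha hb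
    have h1 : (1:ℝ) < (1 + b) / b := by rw [lt_div_iff₀ hb]; linarith
    have h2 : (1 + b) / b < (1 + a) / a := by
      rw [div_lt_div_iff₀ hb ha]; nlinarith
    set s := Real.sqrt ((1 + b) / b) with hsdef
    set t := Real.sqrt ((1 + a) / a) with htdef
    have hs : 1 < s := by
      have : Real.sqrt 1 < s := Real.sqrt_lt_sqrt (by norm_num) h1
      simpa using this
    have hst : s < t := Real.sqrt_lt_sqrt (by positivity) h2
    have hnum : (s - 1) / (s + 1) < (t - 1) / (t + 1) := by
      rw [div_lt_div_iff₀ (by linarith) (by linarith)]; nlinarith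
    have h0 : 0 ≤ (s - 1) / (s + 1) := div_nonneg (by linarith) (by linarith)
    exact pow_lt_pow_left₀ hnum h0 two_ne_zero
  refine ⟨key, ?_⟩
  intro a ha b hb hab
  have h := key ha hb hab
  simp only at h ⊢
  nlinarith
end

section
/- Let α_1, α_2 > 1. The unique solution of the system x1 = x2/α_2 and x2 = 1 - (1-x1)/α_1 is (x1*, x2*) = ((α_1 - 1)/(α_1·α_2 - 1), α_2·(α_1 - 1)/(α_1·α_2 - 1)), and the midpoint satisfies (x1* + x2*)/2 = 1/2 + (α_1 - α_2)/(2(α_1·α_2 - 1)). In particular, if α_1 > α_2 (candidate 1 more flexible), the midpoint exceeds 1/2, so candidate 1's platform is more centrist. -/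
/-! The best-response system is linear: substituting `x₂ = α₂ x₁` into the second equation gives
`(α₁ α₂ - 1) x₁ = α₁ - 1`, which has a unique solution since `α₁ α₂ > 1`. The midpoint identity is
`(α₁ - 1)(1 + α₂) = (α₁ α₂ - 1) + (α₁ - α₂)`, so the midpoint lies right of `1/2` exactly when
`α₁ > α₂`. -/

section BestResponse

variable {K : Type*} [Field K] {a b : K}

theorem bestResponse_system_iff_linear (ha : a ≠ 0) (hb : b ≠ 0) (x y : K) :
    (x = y / b ∧ y = 1 - (1 - x) / a) ↔ (y = b * x ∧ (a * b - 1) * x = a - 1) := by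
  rw [eq_div_iff hb, eq_sub_iff_add_eq, ← eq_sub_iff_add_eq', div_eq_iff ha]
  constructor
  · rintro ⟨rfl, h⟩
    exact ⟨mul_comm x b, by linear_combination h⟩
  · rintro ⟨rfl, h⟩
    exact ⟨mul_comm x b, by linear_combination h⟩

theorem bestResponse_system_iff (ha : a ≠ 0) (hb : b ≠ 0) (hab : a * b - 1 ≠ 0) (x y : K) :
    (x = y / b ∧ y = 1 - (1 - x) / a) ↔
      (x = (a - 1) / (a * b - 1) ∧ y = b * (a - 1) / (a * b - 1)) := by
  rw [bestResponse_system_iff_linear ha hb, mul_div_assoc]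
  constructor
  · rintro ⟨rfl, h⟩
    have hx : x = (a - 1) / (a * b - 1) := by rw [eq_div_iff hab, mul_comm, h]
    exact ⟨hx, by rw [hx]⟩
  · rintro ⟨rfl, rfl⟩
    exact ⟨rfl, mul_div_cancel₀ _ hab⟩

theorem bestResponse_midpoint [NeZero (2 : K)] (hab : a * b - 1 ≠ 0) :
    ((a - 1) / (a * b - 1) + b * (a - 1) / (a * b - 1)) / 2 =
      1 / 2 + (a - b) / (2 * (a * b - 1)) := by
  field_simp
  ring

end BestResponse

theorem stmt18 (α1 α2 : ℝ) (hα1 : 1 < α1) (hα2 : 1 < α2) :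
    (∀ x1 x2 : ℝ,
      (x1 = x2 / α2 ∧ x2 = 1 - (1 - x1) / α1) ↔
        (x1 = (α1 - 1) / (α1 * α2 - 1) ∧ x2 = α2 * (α1 - 1) / (α1 * α2 - 1))) ∧
    ((α1 - 1) / (α1 * α2 - 1) + α2 * (α1 - 1) / (α1 * α2 - 1)) / 2 =
      1/2 + (α1 - α2) / (2 * (α1 * α2 - 1)) ∧
    (α2 < α1 → ((α1 - 1) / (α1 * α2 - 1) + α2 * (α1 - 1) / (α1 * α2 - 1)) / 2 > 1/2) := by
  have hdet : 0 < α1 * α2 - 1 := sub_pos.mpr (one_lt_mul_of_le_of_lt hα1.le hα2)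
  have hmid := bestResponse_midpoint hdet.ne'
  refine ⟨bestResponse_system_iff (by positivity) (by positivity) hdet.ne', hmid, fun h21 => ?_⟩
  have hshift : 0 < (α1 - α2) / (2 * (α1 * α2 - 1)) := div_pos (sub_pos.mpr h21) (by positivity)
  rw [hmid]
  linarith
end
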